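/- arXiv:1412.0632 — 3 statements merged into one kernel-verified Lean document; each statement's English description precedes it below -/
import Mathlib

section
/- For n = 2 and g = y_1²y_2 + y_2^{q-1} (a D_q plane curve singularity, q ≥ 4), one has χ_1(g) = 1, χ_2(g) = q - 1, and χ_3(g) = q. -/
open MvPolynomial

/-- The Hessian matrix of second order partial derivatives of `g`. -/
noncomputable def hessianMatrix {m : ℕ} (g : MvPolynomial (Fin m) ℂ) :
    Matrix (Fin m) (Fin m) (MvPolynomial (Fin m) ℂ) :=
  Matrix.of fun i j => pderiv i (pderiv j g)

/-- The ideal generated by all `k × k` minors of a square matrix.  (Minors coming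
from repeated rows or columns vanish, so in particular for `k > m` this ideal is
zero, matching the convention `h_{n+1}(g) = 0`.) -/
noncomputable def minorsIdeal {m : ℕ} {R : Type*} [CommRing R]
    (M : Matrix (Fin m) (Fin m) R) (k : ℕ) : Ideal R :=
  Ideal.span {x | ∃ r c : Fin k → Fin m, x = (M.submatrix r c).det}

/-- The Jacobian ideal of `g`, generated by its first order partial derivatives. -/
noncomputable def jacobianIdeal {m : ℕ} (g : MvPolynomial (Fin m) ℂ) :
    Ideal (MvPolynomial (Fin m) ℂ) :=
  Ideal.span (Set.range fun i => pderiv i g)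

/-- The `k`-th Hessian number `χ_k(g) = dim_ℂ 𝒪/((g) + J_g + h_k(g))` of a
singularity `g = 0` (computed in the polynomial ring). -/
noncomputable def chi {m : ℕ} (g : MvPolynomial (Fin m) ℂ) (k : ℕ) : ℕ :=
  Module.finrank ℂ (MvPolynomial (Fin m) ℂ ⧸
    (Ideal.span {g} ⊔ jacobianIdeal g ⊔ minorsIdeal (hessianMatrix g) k))

/-! ### infrastructure -/

abbrev R2 := MvPolynomial (Fin 2) ℂ

noncomputable def lcf (m : Fin 2 →₀ ℕ) : R2 →ₗ[ℂ] ℂ where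
  toFun p := coeff m p
  map_add' p q := coeff_add m p q
  map_smul' c p := coeff_smul m c p

@[simp] lemma lcf_apply (m : Fin 2 →₀ ℕ) (p : R2) : lcf m p = coeff m p := rfl

lemma finrank_quot (N : ℕ) (I : Ideal R2) (S : Fin N → R2)
    (f : Fin N → (R2 →ₗ[ℂ] ℂ))
    (hf : ∀ i, ∀ x ∈ I, f i x = 0)
    (hfS : ∀ i j, f i (S j) = if i = j then 1 else 0)
    (hspan : ∀ p : R2, ∃ c : Fin N → ℂ, p - ∑ i, c i • S i ∈ I) :
    Module.finrank ℂ (R2 ⧸ I) = N := by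
  let G : (Fin N → ℂ) →ₗ[ℂ] (R2 ⧸ I) :=
    (Ideal.Quotient.mkₐ ℂ I).toLinearMap.comp (Fintype.linearCombination ℂ S)
  have hG : ∀ c : Fin N → ℂ, G c = Ideal.Quotient.mk I (∑ i, c i • S i) := by
    intro c
    simp only [G, LinearMap.comp_apply, Fintype.linearCombination_apply, map_sum,
      AlgHom.toLinearMap_apply, Ideal.Quotient.mkₐ_eq_mk]
  have hinj : Function.Injective G := by
    rw [injective_iff_map_eq_zero]
    intro c hc
    have hmem : (∑ i, c i • S i) ∈ I := by
      rw [← Ideal.Quotient.eq_zero_iff_mem, ← hG c, hc]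
    funext j
    have h0 := hf j _ hmem
    rw [map_sum] at h0
    simp only [map_smul, hfS, smul_eq_mul, mul_ite, mul_one, mul_zero] at h0
    rw [Finset.sum_ite_eq Finset.univ j c] at h0
    simpa using h0
  have hsurj : Function.Surjective G := by
    intro x
    obtain ⟨p, rfl⟩ := Ideal.Quotient.mk_surjective x
    obtain ⟨c, hc⟩ := hspan p
    exact ⟨c, by rw [hG c, eq_comm, Ideal.Quotient.mk_eq_mk_iff_sub_mem]; exact hc⟩
  have e := LinearEquiv.ofBijective G ⟨hinj, hsurj⟩
  rw [← e.finrank_eq, Module.finrank_pi]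
  simp

lemma hspan_of_monomials (N : ℕ) (I : Ideal R2) (S : Fin N → R2)
    (h : ∀ u : Fin 2 →₀ ℕ, (monomial u 1 : R2) ∈
        Submodule.span ℂ (Set.range S) ⊔ I.restrictScalars ℂ) :
    ∀ p : R2, ∃ c : Fin N → ℂ, p - ∑ i, c i • S i ∈ I := by
  intro p
  have hp : p ∈ Submodule.span ℂ (Set.range S) ⊔ I.restrictScalars ℂ := by
    induction p using MvPolynomial.induction_on' with
    | monomial u a =>
      have : (monomial u a : R2) = a • monomial u 1 := by
        rw [smul_monomial, smul_eq_mul, mul_one]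
      rw [this]
      exact Submodule.smul_mem _ a (h u)
    | add p q hp hq => exact Submodule.add_mem _ hp hq
  obtain ⟨y, hy, z, hz, hyz⟩ := Submodule.mem_sup.mp hp
  obtain ⟨c, hc⟩ := Submodule.mem_span_range_iff_exists_fun ℂ |>.mp hy
  refine ⟨c, ?_⟩
  have : p - ∑ i, c i • S i = z := by rw [← hyz, hc]; ring
  rw [this]
  exact hz

lemma fin2cases (i : Fin 2) : i = 0 ∨ i = 1 := by omega

lemma monomial_eq_prod (u : Fin 2 →₀ ℕ) :
    (monomial u 1 : R2) = X 0 ^ (u 0) * X 1 ^ (u 1) := by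
  have hu : u = Finsupp.single 0 (u 0) + Finsupp.single 1 (u 1) := by
    ext i
    rcases fin2cases i with rfl | rfl <;> simp [Finsupp.single_apply]
  rw [X_pow_eq_monomial, X_pow_eq_monomial, monomial_mul, mul_one, ← hu]

lemma coeff_mul_Xpow (p : R2) (i : Fin 2) (b : ℕ) (μ : Fin 2 →₀ ℕ) :
    coeff μ (p * X i ^ b) =
      if b ≤ μ i then coeff (μ - Finsupp.single i b) p else 0 := by
  rw [X_pow_eq_monomial, coeff_mul_monomial']
  simp only [Finsupp.single_le_iff, mul_one]
section Minors
variable {R : Type*} [CommRing R]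

lemma minorsIdeal_one (M : Matrix (Fin 2) (Fin 2) R) :
    minorsIdeal M 1 = Ideal.span {M 0 0, M 0 1, M 1 0, M 1 1} := by
  apply le_antisymm
  · rw [minorsIdeal, Ideal.span_le]
    rintro x ⟨r, c, rfl⟩
    rw [Matrix.det_fin_one, Matrix.submatrix_apply]
    rcases fin2cases (r 0) with h | h <;> rcases fin2cases (c 0) with h' | h' <;>
      rw [h, h'] <;> apply Ideal.subset_span <;> simp
  · rw [Ideal.span_le]
    intro x hx
    simp only [Set.mem_insert_iff, Set.mem_singleton_iff] at hx
    have mem : ∀ i j : Fin 2, M i j ∈ minorsIdeal M 1 := fun i j =>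
      Ideal.subset_span ⟨![i], ![j], by rw [Matrix.det_fin_one, Matrix.submatrix_apply]; simp⟩
    rcases hx with rfl | rfl | rfl | rfl <;> exact mem _ _

lemma minorsIdeal_two_le (M : Matrix (Fin 2) (Fin 2) R) :
    minorsIdeal M 2 ≤ Ideal.span {M.det} := by
  rw [minorsIdeal, Ideal.span_le]
  rintro x ⟨r, c, rfl⟩
  rw [Matrix.det_fin_two (M.submatrix r c)]
  simp only [Matrix.submatrix_apply]
  rcases fin2cases (r 0) with h | h <;> rcases fin2cases (r 1) with h' | h' <;>
    rcases fin2cases (c 0) with h'' | h'' <;> rcases fin2cases (c 1) with h''' | h''' <;>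
    rw [h, h', h'', h'''] <;> rw [SetLike.mem_coe] <;>
    first
      | (refine Ideal.mem_span_singleton.mpr ⟨0, ?_⟩; rw [Matrix.det_fin_two]; ring1)
      | (refine Ideal.mem_span_singleton.mpr ⟨1, ?_⟩; rw [Matrix.det_fin_two]; ring1)
      | (refine Ideal.mem_span_singleton.mpr ⟨-1, ?_⟩; rw [Matrix.det_fin_two]; ring1)

lemma det_mem_minorsIdeal_two (M : Matrix (Fin 2) (Fin 2) R) :
    M.det ∈ minorsIdeal M 2 :=
  Ideal.subset_span ⟨id, id, by simp⟩

lemma minorsIdeal_three (M : Matrix (Fin 2) (Fin 2) R) :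
    minorsIdeal M 3 = ⊥ := by
  rw [minorsIdeal, eq_bot_iff, Ideal.span_le]
  rintro x ⟨r, c, rfl⟩
  obtain ⟨i, j, hne, heq⟩ := Fintype.exists_ne_map_eq_of_card_lt r (by simp)
  have : (M.submatrix r c).det = 0 :=
    Matrix.det_zero_of_row_eq hne (by funext k; simp [Matrix.submatrix_apply, heq])
  simp [this]

end Minors


noncomputable def gD (q : ℕ) : R2 := (X 0 : R2) ^ 2 * X 1 + X 1 ^ (q - 1)

lemma pd0 (q : ℕ) (hq : 4 ≤ q) : pderiv 0 (gD q) = 2 * (X 0 * X 1) := by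
  simp [gD, pderiv_mul, pderiv_pow, pderiv_X_self, pderiv_X_of_ne (by decide : (1:Fin 2) ≠ 0)]
  ring

lemma pd1 (q : ℕ) (hq : 4 ≤ q) :
    pderiv 1 (gD q) = X 0 ^ 2 + ((q : R2) - 1) * X 1 ^ (q - 2) := by
  have h1 : q - 1 - 1 = q - 2 := by omega
  have h2 : ((q - 1 : ℕ) : R2) = (q : R2) - 1 := by
    push_cast [Nat.cast_sub (by omega : 1 ≤ q)]; ring
  simp [gD, pderiv_mul, pderiv_pow, pderiv_X_self, pderiv_X_of_ne (by decide : (0:Fin 2) ≠ 1), h1, h2]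

lemma pderiv_two (i : Fin 2) : pderiv i (2 : R2) = 0 := by
  rw [show (2:R2) = C 2 from (map_ofNat C 2).symm]; exact pderiv_C

lemma hess (q : ℕ) (hq : 4 ≤ q) (i j : Fin 2) :
    (Matrix.of fun i j => pderiv i (pderiv j (gD q))) i j =
      (Matrix.of ![![2 * X 1, 2 * X 0], ![2 * X 0, ((q:R2)-1)*((q:R2)-2) * X 1 ^ (q-3)]] : Matrix (Fin 2) (Fin 2) R2) i j := by
  have h1 : q - 2 - 1 = q - 3 := by omega
  have h2 : ((q - 2 : ℕ) : R2) = (q : R2) - 2 := by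
    push_cast [Nat.cast_sub (by omega : 2 ≤ q)]; ring
  fin_cases i <;> fin_cases j <;>
    simp [pd0 q hq, pd1 q hq, pderiv_mul, pderiv_pow, pderiv_X_self,
      pderiv_X_of_ne (by decide : (1:Fin 2) ≠ 0), pderiv_X_of_ne (by decide : (0:Fin 2) ≠ 1), h1, h2, pderiv_two] <;>
    ring_nf

lemma jac_eq (g : R2) : jacobianIdeal g = Ideal.span {pderiv 0 g, pderiv 1 g} := by
  rw [jacobianIdeal]
  congr 1
  ext x
  constructor
  · rintro ⟨i, rfl⟩
    rcases fin2cases i with rfl | rfl <;> simp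
  · intro h
    rcases h with rfl | rfl
    · exact ⟨0, rfl⟩
    · exact ⟨1, rfl⟩

lemma half_mul (p : R2) : C (2⁻¹ : ℂ) * (2 * p) = p := by
  rw [show (2:R2) = C 2 from (map_ofNat C 2).symm, ← mul_assoc, ← C_mul]
  norm_num

section CaseOne

variable (q : ℕ)

noncomputable def Hq : Matrix (Fin 2) (Fin 2) R2 :=
  Matrix.of ![![2 * X 1, 2 * X 0], ![2 * X 0, ((q:R2)-1)*((q:R2)-2) * X 1 ^ (q-3)]]

lemma hessEq (hq : 4 ≤ q) : hessianMatrix (gD q) = Hq q := Matrix.ext (hess q hq)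

lemma ideal_one (hq : 4 ≤ q) :
    Ideal.span {gD q} ⊔ jacobianIdeal (gD q) ⊔ minorsIdeal (hessianMatrix (gD q)) 1
      = Ideal.span {(X 0 : R2), X 1} := by
  apply le_antisymm
  · refine sup_le (sup_le ?_ ?_) ?_
    · rw [Ideal.span_le, Set.singleton_subset_iff]
      exact Ideal.mem_span_pair.mpr ⟨X 0 * X 1, X 1 ^ (q-2), by
        rw [gD, show q-1 = (q-2)+1 by omega, pow_succ]; ring⟩
    · rw [jac_eq, Ideal.span_le]
      rintro x (rfl | rfl)
      · exact Ideal.mem_span_pair.mpr ⟨2 * X 1, 0, by rw [pd0 q hq]; ring⟩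
      · exact Ideal.mem_span_pair.mpr ⟨X 0, ((q:R2)-1) * X 1 ^ (q-3), by
          rw [pd1 q hq, show q-2 = (q-3)+1 by omega, pow_succ]; ring⟩
    · rw [hessEq q hq, minorsIdeal_one, Ideal.span_le]
      rintro x (rfl | rfl | rfl | rfl)
      · exact Ideal.mem_span_pair.mpr ⟨0, 2, by simp [Hq]; try ring⟩
      · exact Ideal.mem_span_pair.mpr ⟨2, 0, by simp [Hq]; try ring⟩
      · exact Ideal.mem_span_pair.mpr ⟨2, 0, by simp [Hq]; try ring⟩
      · exact Ideal.mem_span_pair.mpr ⟨0, ((q:R2)-1)*((q:R2)-2) * X 1 ^ (q-4), by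
          simp only [Hq, Matrix.of_apply]
          rw [show q-3 = (q-4)+1 by omega, pow_succ]
          simp
          ring⟩
  · rw [Ideal.span_le]
    have hmem : ∀ i j : Fin 2, (Hq q) i j ∈
        Ideal.span {gD q} ⊔ jacobianIdeal (gD q) ⊔ minorsIdeal (hessianMatrix (gD q)) 1 := by
      intro i j
      refine le_sup_right (a := Ideal.span {gD q} ⊔ jacobianIdeal (gD q)) ?_
      exact Ideal.subset_span ⟨![i], ![j], by
        rw [Matrix.det_fin_one, Matrix.submatrix_apply, hessEq q hq]; simp⟩
    rintro x (rfl | rfl)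
    · have := Ideal.mul_mem_left _ (C (2⁻¹:ℂ)) (hmem 0 1)
      rwa [show (Hq q) 0 1 = 2 * X 0 by simp [Hq], half_mul] at this
    · have := Ideal.mul_mem_left _ (C (2⁻¹:ℂ)) (hmem 0 0)
      rwa [show (Hq q) 0 0 = 2 * X 1 by simp [Hq], half_mul] at this

lemma chi_one (hq : 4 ≤ q) : chi (gD q) 1 = 1 := by
  unfold chi
  rw [show (gD q : MvPolynomial (Fin 2) ℂ) = gD q from rfl, ideal_one q hq]
  refine finrank_quot 1 _ (fun _ => 1) (fun _ => lcf 0) ?_ ?_ ?_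
  · intro i x hx
    obtain ⟨a, b, hab⟩ := Ideal.mem_span_pair.mp hx
    rw [← hab, map_add]
    simp only [lcf_apply]
    rw [show (X 0 : R2) = X 0 ^ 1 by rw [pow_one],
      show (X 1 : R2) = X 1 ^ 1 by rw [pow_one], coeff_mul_Xpow, coeff_mul_Xpow]
    simp
  · intro i j
    have : i = j := Subsingleton.elim i j
    simp [this, lcf_apply]
  · apply hspan_of_monomials
    intro u
    rw [monomial_eq_prod]
    by_cases h0 : u 0 = 0
    · by_cases h1 : u 1 = 0
      · rw [h0, h1]
        simp only [pow_zero, one_mul]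
        refine le_sup_left (a := Submodule.span ℂ (Set.range (fun (_ : Fin 1) => (1:R2)))) ?_
        exact Submodule.subset_span ⟨0, rfl⟩
      · refine le_sup_right (a := Submodule.span ℂ (Set.range (fun (_ : Fin 1) => (1:R2)))) ?_
        rw [Submodule.restrictScalars_mem, h0, show u 1 = (u 1 - 1) + 1 by omega, pow_succ]
        simp only [pow_zero, one_mul]
        exact Ideal.mul_mem_left _ _ (Ideal.subset_span (by simp))
    · refine le_sup_right (a := Submodule.span ℂ (Set.range (fun (_ : Fin 1) => (1:R2)))) ?_
      rw [Submodule.restrictScalars_mem, show u 0 = (u 0 - 1) + 1 by omega, pow_succ,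
        mul_assoc, mul_comm (X 0) (X 1 ^ (u 1)), ← mul_assoc]
      exact Ideal.mul_mem_left _ _ (Ideal.subset_span (by simp))

end CaseOne

-- appended to e.lean after compile check
section CaseTwoThree

lemma mem_span_triple {a b c x : R2} :
    x ∈ Ideal.span {a, b, c} ↔ ∃ p r s : R2, x = p*a + r*b + s*c := by
  constructor
  · intro h
    rw [show ({a, b, c} : Set R2) = insert a (insert b {c}) from rfl] at h
    obtain ⟨p, y, hy, rfl⟩ := Ideal.mem_span_insert.mp h
    obtain ⟨r, z, hz, rfl⟩ := Ideal.mem_span_insert.mp hy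
    obtain ⟨s, rfl⟩ := Ideal.mem_span_singleton'.mp hz
    exact ⟨p, r, s, by ring⟩
  · rintro ⟨p, r, s, rfl⟩
    refine Ideal.add_mem _ (Ideal.add_mem _ ?_ ?_) ?_ <;>
      exact Ideal.mul_mem_left _ _ (Ideal.subset_span (by simp))

-- coefficient helpers
lemma coeffA (p : R2) (μ : Fin 2 →₀ ℕ) (h : μ 0 = 0) : coeff μ (p * (X 0 * X 1)) = 0 := by
  rw [show p * (X 0 * X 1) = p * X 1 ^ 1 * X 0 ^ 1 by ring, coeff_mul_Xpow]
  rw [if_neg (by omega)]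

lemma coeffA' (p : R2) (μ : Fin 2 →₀ ℕ) (h : μ 1 = 0) : coeff μ (p * (X 0 * X 1)) = 0 := by
  rw [show p * (X 0 * X 1) = p * X 0 ^ 1 * X 1 ^ 1 by ring, coeff_mul_Xpow]
  rw [if_neg (by omega)]

lemma coeffB (p : R2) (μ : Fin 2 →₀ ℕ) (h : μ 0 < 2) : coeff μ (p * X 0 ^ 2) = 0 := by
  rw [coeff_mul_Xpow, if_neg (by omega)]

lemma coeffC (p : R2) (b : ℕ) (μ : Fin 2 →₀ ℕ) (h : μ 1 < b) : coeff μ (p * X 1 ^ b) = 0 := by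
  rw [coeff_mul_Xpow, if_neg (by omega)]

lemma coeffD (p : R2) (b : ℕ) : coeff (Finsupp.single 1 b) (p * X 1 ^ b) = coeff 0 p := by
  rw [coeff_mul_Xpow, if_pos (by simp), tsub_self]

lemma coeffE (p : R2) : coeff (Finsupp.single 0 2) (p * X 0 ^ 2) = coeff 0 p := by
  rw [coeff_mul_Xpow, if_pos (by simp), tsub_self]

lemma single_apply_ne (a b : ℕ) : (Finsupp.single (0 : Fin 2) a) 1 = 0 ∧
    (Finsupp.single (1 : Fin 2) b) 0 = 0 := by
  constructor <;> rw [Finsupp.single_apply_eq_zero] <;> intro h <;> simp at h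

lemma coeff_X0_single1 (i : ℕ) : coeff (Finsupp.single 1 i) (X 0 : R2) = 0 := by
  rw [show (X 0 : R2) = X 0 ^ 1 by rw [pow_one], X_pow_eq_monomial, coeff_monomial, if_neg]
  intro h
  have := congrArg (fun f => f (0 : Fin 2)) h
  simp [Finsupp.single_apply] at this

lemma coeff_X1pow_single0 (j a : ℕ) (ha : a ≠ 0) :
    coeff (Finsupp.single 0 a) ((X 1 : R2) ^ j) = 0 := by
  rw [X_pow_eq_monomial, coeff_monomial, if_neg]
  intro h
  have := congrArg (fun f => f (0 : Fin 2)) h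
  simp [Finsupp.single_apply] at this
  exact ha this.symm

lemma coeff_X1pow_single1 (j i : ℕ) :
    coeff (Finsupp.single 1 i) ((X 1 : R2) ^ j) = if i = j then 1 else 0 := by
  rw [X_pow_eq_monomial, coeff_monomial]
  by_cases h : i = j
  · rw [if_pos (by rw [h]), if_pos h]
  · rw [if_neg (fun hh => h ((Finsupp.single_injective 1 hh).symm)), if_neg h]

end CaseTwoThree
section CaseTwo

variable (q : ℕ)

lemma coeff_X0_single0 : coeff (Finsupp.single 0 1) (X 0 : R2) = 1 := by
  rw [show (X 0 : R2) = X 0 ^ 1 by rw [pow_one], X_pow_eq_monomial, coeff_monomial, if_pos rfl]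

lemma detD (hq : 4 ≤ q) : (hessianMatrix (gD q)).det
    = 2*((q:R2)-1)*((q:R2)-2) * X 1^(q-2) - 4 * X 0^2 := by
  rw [hessEq q hq, Matrix.det_fin_two]
  simp only [Hq, Matrix.of_apply, Matrix.cons_val', Matrix.cons_val_zero, Matrix.cons_val_one,
    Matrix.head_cons, Matrix.head_fin_const, Matrix.empty_val', Matrix.cons_val_fin_one]
  rw [show q-2 = (q-3)+1 by omega, pow_succ]
  ring

lemma Cq1 : (C ((q:ℂ)-1) : R2) = (q:R2)-1 := by
  rw [map_sub, map_one, map_natCast]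

lemma Cbeta : (C (2*((q:ℂ)-1)*q) : R2) = 2*((q:R2)-1)*(q:R2) := by
  rw [map_mul, map_mul, map_sub, map_one, map_natCast, map_ofNat]

lemma hbeta (hq : 4 ≤ q) : (2*((q:ℂ)-1)*(q:ℂ)) ≠ 0 := by
  refine mul_ne_zero (mul_ne_zero two_ne_zero ?_) ?_
  · rw [sub_ne_zero]
    exact_mod_cast (by omega : (q:ℕ) ≠ 1)
  · exact_mod_cast (by omega : (q:ℕ) ≠ 0)

lemma ideal_two (hq : 4 ≤ q) :
    Ideal.span {gD q} ⊔ jacobianIdeal (gD q) ⊔ minorsIdeal (hessianMatrix (gD q)) 2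
      = Ideal.span {X 0 * X 1, (X 0:R2)^2, X 1^(q-2)} := by
  apply le_antisymm
  · refine sup_le (sup_le ?_ ?_) ?_
    · rw [Ideal.span_le, Set.singleton_subset_iff]
      exact mem_span_triple.mpr ⟨0, X 1, X 1, by
        rw [gD, show q-1 = (q-2)+1 by omega, pow_succ]; ring⟩
    · rw [jac_eq, Ideal.span_le]
      rintro x (rfl | rfl)
      · exact mem_span_triple.mpr ⟨2, 0, 0, by rw [pd0 q hq]; ring⟩
      · exact mem_span_triple.mpr ⟨0, 1, (q:R2)-1, by rw [pd1 q hq]; ring⟩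
    · refine le_trans (minorsIdeal_two_le _) ?_
      rw [Ideal.span_le, Set.singleton_subset_iff]
      exact mem_span_triple.mpr ⟨0, -4, 2*((q:R2)-1)*((q:R2)-2), by rw [detD q hq]; ring⟩
  · have hpd0 : pderiv 0 (gD q) ∈ Ideal.span {gD q} ⊔ jacobianIdeal (gD q) ⊔
        minorsIdeal (hessianMatrix (gD q)) 2 :=
      Submodule.mem_sup_left (Submodule.mem_sup_right
        (by rw [jac_eq]; exact Ideal.subset_span (by simp)))
    have hpd1 : pderiv 1 (gD q) ∈ Ideal.span {gD q} ⊔ jacobianIdeal (gD q) ⊔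
        minorsIdeal (hessianMatrix (gD q)) 2 :=
      Submodule.mem_sup_left (Submodule.mem_sup_right
        (by rw [jac_eq]; exact Ideal.subset_span (by simp)))
    have hxy : X 0 * X 1 ∈ Ideal.span {gD q} ⊔ jacobianIdeal (gD q) ⊔
        minorsIdeal (hessianMatrix (gD q)) 2 := by
      have := Ideal.mul_mem_left _ (C (2⁻¹:ℂ)) hpd0
      rwa [pd0 q hq, half_mul] at this
    have hY : (X 1:R2)^(q-2) ∈ Ideal.span {gD q} ⊔ jacobianIdeal (gD q) ⊔
        minorsIdeal (hessianMatrix (gD q)) 2 := by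
      have hdet : (hessianMatrix (gD q)).det ∈ Ideal.span {gD q} ⊔ jacobianIdeal (gD q) ⊔
          minorsIdeal (hessianMatrix (gD q)) 2 :=
        Submodule.mem_sup_right (det_mem_minorsIdeal_two _)
      have hu := add_mem hdet (Ideal.mul_mem_left _ 4 hpd1)
      have hid : (hessianMatrix (gD q)).det + 4 * pderiv 1 (gD q)
          = C (2*((q:ℂ)-1)*q) * X 1^(q-2) := by
        rw [detD q hq, pd1 q hq, Cbeta]; ring
      have := Ideal.mul_mem_left _ (C (2*((q:ℂ)-1)*(q:ℂ))⁻¹) hu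
      rwa [hid, ← mul_assoc, ← C_mul, inv_mul_cancel₀ (hbeta q hq), C_1, one_mul] at this
    have hX2 : (X 0:R2)^2 ∈ Ideal.span {gD q} ⊔ jacobianIdeal (gD q) ⊔
        minorsIdeal (hessianMatrix (gD q)) 2 := by
      have := sub_mem hpd1 (Ideal.mul_mem_left _ ((q:R2)-1) hY)
      rwa [pd1 q hq, add_sub_cancel_right] at this
    rw [Ideal.span_le]
    rintro x (rfl | rfl | rfl) <;> assumption

lemma chi_two (hq : 4 ≤ q) : chi (gD q) 2 = q - 1 := by
  unfold chi
  rw [ideal_two q hq]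
  refine finrank_quot (q-1) _ (fun i => if (i:ℕ) = q-2 then X 0 else X 1 ^ (i:ℕ))
    (fun i => if (i:ℕ) = q-2 then lcf (Finsupp.single 0 1) else lcf (Finsupp.single 1 (i:ℕ)))
    ?_ ?_ ?_
  · intro i x hx
    obtain ⟨p, r, s, rfl⟩ := mem_span_triple.mp hx
    by_cases hi : (i:ℕ) = q-2
    · rw [if_pos hi]
      simp only [lcf_apply, map_add]
      rw [coeffA' _ _ (by simp [Finsupp.single_apply]),
        coeffB _ _ (by simp [Finsupp.single_apply]),
        coeffC _ _ _ (by simp [Finsupp.single_apply]; omega)]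
      ring
    · rw [if_neg hi]
      have hilt : (i:ℕ) < q-2 := by have := i.isLt; omega
      simp only [lcf_apply, coeff_add]
      rw [coeffA _ _ (by simp [Finsupp.single_apply]),
        coeffB _ _ (by simp [Finsupp.single_apply]),
        coeffC _ _ _ (by simp [Finsupp.single_apply]; omega)]
      ring
  · intro i j
    by_cases hi : (i:ℕ) = q-2 <;> by_cases hj : (j:ℕ) = q-2
    · rw [if_pos hi, if_pos hj, lcf_apply, coeff_X0_single0,
        if_pos (Fin.val_injective (hi.trans hj.symm))]
    · rw [if_pos hi, if_neg hj, lcf_apply, coeff_X1pow_single0 _ _ one_ne_zero,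
        if_neg (fun h => hj (by rw [← h]; exact hi))]
    · rw [if_neg hi, if_pos hj, lcf_apply, coeff_X0_single1,
        if_neg (fun h => hi (by rw [h]; exact hj))]
    · rw [if_neg hi, if_neg hj, lcf_apply, coeff_X1pow_single1]
      by_cases h : i = j
      · rw [if_pos (by rw [h]), if_pos h]
      · rw [if_neg (fun hh => h (Fin.val_injective hh)), if_neg h]
  · apply hspan_of_monomials
    intro u
    rw [monomial_eq_prod]
    by_cases ha : u 0 = 0
    · rw [ha, pow_zero, one_mul]
      by_cases hb : u 1 ≤ q-3
      · refine le_sup_left (a := Submodule.span ℂ (Set.range fun i : Fin (q-1) =>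
          if (i:ℕ) = q-2 then (X 0 : R2) else X 1 ^ (i:ℕ))) ?_
        refine Submodule.subset_span ⟨⟨u 1, by omega⟩, ?_⟩
        dsimp only
        rw [if_neg (by omega)]
      · refine le_sup_right (a := Submodule.span ℂ (Set.range fun i : Fin (q-1) =>
          if (i:ℕ) = q-2 then (X 0 : R2) else X 1 ^ (i:ℕ))) ?_
        rw [Submodule.restrictScalars_mem,
          show (X 1:R2)^(u 1) = X 1^(u 1-(q-2)) * X 1^(q-2) by
            rw [← pow_add]; congr 1; omega]
        exact Ideal.mul_mem_left _ _ (Ideal.subset_span (by simp))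
    · by_cases hb : u 1 = 0
      · rw [hb, pow_zero, mul_one]
        by_cases h1 : u 0 = 1
        · rw [h1, pow_one]
          refine le_sup_left (a := Submodule.span ℂ (Set.range fun i : Fin (q-1) =>
            if (i:ℕ) = q-2 then (X 0 : R2) else X 1 ^ (i:ℕ))) ?_
          refine Submodule.subset_span ⟨⟨q-2, by omega⟩, ?_⟩
          dsimp only
          rw [if_pos (by omega)]
        · refine le_sup_right (a := Submodule.span ℂ (Set.range fun i : Fin (q-1) =>
            if (i:ℕ) = q-2 then (X 0 : R2) else X 1 ^ (i:ℕ))) ?_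
          rw [Submodule.restrictScalars_mem,
            show (X 0:R2)^(u 0) = X 0^(u 0-2) * X 0^2 by rw [← pow_add]; congr 1; omega]
          exact Ideal.mul_mem_left _ _ (Ideal.subset_span (by simp))
      · refine le_sup_right (a := Submodule.span ℂ (Set.range fun i : Fin (q-1) =>
          if (i:ℕ) = q-2 then (X 0 : R2) else X 1 ^ (i:ℕ))) ?_
        rw [Submodule.restrictScalars_mem,
          show (X 0:R2)^(u 0) * X 1^(u 1) = (X 0^(u 0-1) * X 1^(u 1-1)) * (X 0 * X 1) by
            rw [mul_mul_mul_comm, ← pow_succ, ← pow_succ]; congr 2 <;> omega]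
        exact Ideal.mul_mem_left _ _ (Ideal.subset_span (by simp))

end CaseTwo
section CaseThree

variable (q : ℕ)

lemma coeff_X0_single02 : coeff (Finsupp.single 0 2) (X 0 : R2) = 0 := by
  rw [show (X 0 : R2) = X 0 ^ 1 by rw [pow_one], X_pow_eq_monomial, coeff_monomial, if_neg]
  intro h
  have := Finsupp.single_injective (0 : Fin 2) h
  norm_num at this

lemma ideal_three (hq : 4 ≤ q) :
    Ideal.span {gD q} ⊔ jacobianIdeal (gD q) ⊔ minorsIdeal (hessianMatrix (gD q)) 3
      = Ideal.span {X 0 * X 1, (X 0:R2)^2 + C ((q:ℂ)-1) * X 1^(q-2), X 1^(q-1)} := by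
  apply le_antisymm
  · refine sup_le (sup_le ?_ ?_) ?_
    · rw [Ideal.span_le, Set.singleton_subset_iff]
      exact mem_span_triple.mpr ⟨X 0, 0, 1, by rw [gD]; ring⟩
    · rw [jac_eq, Ideal.span_le]
      rintro x (rfl | rfl)
      · exact mem_span_triple.mpr ⟨2, 0, 0, by rw [pd0 q hq]; ring⟩
      · exact mem_span_triple.mpr ⟨0, 1, 0, by rw [pd1 q hq, Cq1]; ring⟩
    · rw [minorsIdeal_three]
      exact bot_le
  · have hpd0 : pderiv 0 (gD q) ∈ Ideal.span {gD q} ⊔ jacobianIdeal (gD q) ⊔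
        minorsIdeal (hessianMatrix (gD q)) 3 :=
      Submodule.mem_sup_left (Submodule.mem_sup_right
        (by rw [jac_eq]; exact Ideal.subset_span (by simp)))
    have hpd1 : pderiv 1 (gD q) ∈ Ideal.span {gD q} ⊔ jacobianIdeal (gD q) ⊔
        minorsIdeal (hessianMatrix (gD q)) 3 :=
      Submodule.mem_sup_left (Submodule.mem_sup_right
        (by rw [jac_eq]; exact Ideal.subset_span (by simp)))
    have hg : gD q ∈ Ideal.span {gD q} ⊔ jacobianIdeal (gD q) ⊔
        minorsIdeal (hessianMatrix (gD q)) 3 :=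
      Submodule.mem_sup_left (Submodule.mem_sup_left (Ideal.subset_span rfl))
    have hxy : X 0 * X 1 ∈ Ideal.span {gD q} ⊔ jacobianIdeal (gD q) ⊔
        minorsIdeal (hessianMatrix (gD q)) 3 := by
      have := Ideal.mul_mem_left _ (C (2⁻¹:ℂ)) hpd0
      rwa [pd0 q hq, half_mul] at this
    have hmid : (X 0:R2)^2 + C ((q:ℂ)-1) * X 1^(q-2) ∈ Ideal.span {gD q} ⊔
        jacobianIdeal (gD q) ⊔ minorsIdeal (hessianMatrix (gD q)) 3 := by
      have := hpd1
      rwa [pd1 q hq, ← Cq1 q] at this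
    have hY : (X 1:R2)^(q-1) ∈ Ideal.span {gD q} ⊔ jacobianIdeal (gD q) ⊔
        minorsIdeal (hessianMatrix (gD q)) 3 := by
      have := sub_mem hg (Ideal.mul_mem_left _ (C (2⁻¹:ℂ) * X 0) hpd0)
      rwa [pd0 q hq,
        show gD q - C (2⁻¹:ℂ) * X 0 * (2*(X 0 * X 1)) =
          gD q - X 0^2 * X 1 * (C (2⁻¹:ℂ) * 2) by ring,
        show (C (2⁻¹:ℂ) : R2) * 2 = 1 by
          rw [show (2:R2) = C 2 from (map_ofNat C 2).symm, ← C_mul]; norm_num,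
        mul_one, gD, add_sub_cancel_left] at this
    rw [Ideal.span_le]
    rintro x (rfl | rfl | rfl) <;> assumption

lemma chi_three (hq : 4 ≤ q) : chi (gD q) 3 = q := by
  unfold chi
  rw [ideal_three q hq]
  refine finrank_quot q _ (fun i => if (i:ℕ) = q-1 then X 0 else X 1 ^ (i:ℕ))
    (fun i => if (i:ℕ) = q-1 then lcf (Finsupp.single 0 1) else
      if (i:ℕ) = q-2 then lcf (Finsupp.single 1 (q-2)) - ((q:ℂ)-1) • lcf (Finsupp.single 0 2)
      else lcf (Finsupp.single 1 (i:ℕ)))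
    ?_ ?_ ?_
  · intro i x hx
    obtain ⟨p, r, s, rfl⟩ := mem_span_triple.mp hx
    rw [show p * (X 0 * X 1) + r * ((X 0:R2)^2 + C ((q:ℂ)-1) * X 1^(q-2)) + s * X 1^(q-1)
        = p * (X 0 * X 1) + (r * X 0^2 + C ((q:ℂ)-1) * (r * X 1^(q-2))) + s * X 1^(q-1) by ring]
    by_cases hi1 : (i:ℕ) = q-1
    · rw [if_pos hi1]
      simp only [lcf_apply, coeff_add, coeff_C_mul]
      rw [coeffA' _ _ (by simp [Finsupp.single_apply]),
        coeffB _ _ (by simp [Finsupp.single_apply]),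
        coeffC _ _ _ (by simp [Finsupp.single_apply]; omega),
        coeffC _ _ _ (by simp [Finsupp.single_apply]; omega)]
      ring
    · rw [if_neg hi1]
      by_cases hi2 : (i:ℕ) = q-2
      · rw [if_pos hi2]
        simp only [LinearMap.sub_apply, LinearMap.smul_apply, lcf_apply, coeff_add,
          coeff_C_mul, smul_eq_mul]
        rw [coeffA _ _ (by simp [Finsupp.single_apply]),
          coeffB _ _ (by simp [Finsupp.single_apply]),
          coeffD,
          coeffC _ _ _ (by simp [Finsupp.single_apply]; omega),
          coeffA' _ _ (by simp [Finsupp.single_apply]),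
          coeffE,
          coeffC _ _ _ (by simp [Finsupp.single_apply]; omega),
          coeffC _ _ _ (by simp [Finsupp.single_apply]; omega)]
        ring
      · rw [if_neg hi2]
        have hilt : (i:ℕ) < q-2 := by have := i.isLt; omega
        simp only [lcf_apply, coeff_add, coeff_C_mul]
        rw [coeffA _ _ (by simp [Finsupp.single_apply]),
          coeffB _ _ (by simp [Finsupp.single_apply]),
          coeffC _ _ _ (by simp [Finsupp.single_apply]; omega),
          coeffC _ _ _ (by simp [Finsupp.single_apply]; omega)]
        ring
  · intro i j
    by_cases hj : (j:ℕ) = q-1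
    · rw [if_pos hj]
      by_cases hi1 : (i:ℕ) = q-1
      · rw [if_pos hi1, lcf_apply, coeff_X0_single0,
          if_pos (Fin.val_injective (hi1.trans hj.symm))]
      · rw [if_neg hi1]
        by_cases hi2 : (i:ℕ) = q-2
        · rw [if_pos hi2, LinearMap.sub_apply, LinearMap.smul_apply, lcf_apply, lcf_apply,
            coeff_X0_single1, coeff_X0_single02, smul_zero, sub_zero,
            if_neg (fun h => hi1 (by rw [h]; exact hj))]
        · rw [if_neg hi2, lcf_apply, coeff_X0_single1,
            if_neg (fun h => hi1 (by rw [h]; exact hj))]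
    · rw [if_neg hj]
      by_cases hi1 : (i:ℕ) = q-1
      · rw [if_pos hi1, lcf_apply, coeff_X1pow_single0 _ _ one_ne_zero,
          if_neg (fun h => hj (by rw [← h]; exact hi1))]
      · rw [if_neg hi1]
        by_cases hi2 : (i:ℕ) = q-2
        · rw [if_pos hi2, LinearMap.sub_apply, LinearMap.smul_apply, lcf_apply, lcf_apply,
            coeff_X1pow_single1, coeff_X1pow_single0 _ _ two_ne_zero, smul_zero, sub_zero]
          by_cases h : i = j
          · rw [if_pos (by rw [← h, hi2]), if_pos h]
          · rw [if_neg (fun hh => h (Fin.val_injective (hi2.trans hh))), if_neg h]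
        · rw [if_neg hi2, lcf_apply, coeff_X1pow_single1]
          by_cases h : i = j
          · rw [if_pos (by rw [h]), if_pos h]
          · rw [if_neg (fun hh => h (Fin.val_injective hh)), if_neg h]
  · apply hspan_of_monomials
    intro u
    rw [monomial_eq_prod]
    by_cases ha : u 0 = 0
    · rw [ha, pow_zero, one_mul]
      by_cases hb : u 1 ≤ q-2
      · refine le_sup_left (a := Submodule.span ℂ (Set.range fun i : Fin q =>
          if (i:ℕ) = q-1 then (X 0 : R2) else X 1 ^ (i:ℕ))) ?_
        refine Submodule.subset_span ⟨⟨u 1, by omega⟩, ?_⟩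
        dsimp only
        rw [if_neg (by omega)]
      · refine le_sup_right (a := Submodule.span ℂ (Set.range fun i : Fin q =>
          if (i:ℕ) = q-1 then (X 0 : R2) else X 1 ^ (i:ℕ))) ?_
        rw [Submodule.restrictScalars_mem,
          show (X 1:R2)^(u 1) = X 1^(u 1-(q-1)) * X 1^(q-1) by
            rw [← pow_add]; congr 1; omega]
        exact Ideal.mul_mem_left _ _ (Ideal.subset_span (by simp))
    · by_cases hb : u 1 = 0
      · rw [hb, pow_zero, mul_one]
        by_cases h1 : u 0 = 1
        · rw [h1, pow_one]
          refine le_sup_left (a := Submodule.span ℂ (Set.range fun i : Fin q =>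
            if (i:ℕ) = q-1 then (X 0 : R2) else X 1 ^ (i:ℕ))) ?_
          refine Submodule.subset_span ⟨⟨q-1, by omega⟩, ?_⟩
          dsimp only
          rw [if_pos (by omega)]
        · by_cases h2 : u 0 = 2
          · rw [h2]
            have e2 : (X 0:R2)^2 = ((X 0:R2)^2 + C ((q:ℂ)-1) * X 1^(q-2))
                - ((q:ℂ)-1) • (X 1:R2)^(q-2) := by
              rw [smul_eq_C_mul]; ring
            have hm : ((X 0:R2)^2 + C ((q:ℂ)-1) * X 1^(q-2)) - ((q:ℂ)-1) • (X 1:R2)^(q-2) ∈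
                Submodule.span ℂ (Set.range fun i : Fin q =>
                  if (i:ℕ) = q-1 then (X 0 : R2) else X 1 ^ (i:ℕ)) ⊔
                Submodule.restrictScalars ℂ (Ideal.span {X 0 * X 1,
                  (X 0:R2)^2 + C ((q:ℂ)-1) * X 1^(q-2), X 1^(q-1)}) := by
              refine Submodule.sub_mem _ ?_ ?_
              · refine le_sup_right (a := Submodule.span ℂ (Set.range fun i : Fin q =>
                  if (i:ℕ) = q-1 then (X 0 : R2) else X 1 ^ (i:ℕ))) ?_
                rw [Submodule.restrictScalars_mem]
                exact Ideal.subset_span (Set.mem_insert_iff.mpr (Or.inr (Set.mem_insert _ _)))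
              · refine le_sup_left (a := Submodule.span ℂ (Set.range fun i : Fin q =>
                  if (i:ℕ) = q-1 then (X 0 : R2) else X 1 ^ (i:ℕ))) ?_
                refine Submodule.smul_mem _ _ ?_
                refine Submodule.subset_span ⟨⟨q-2, by omega⟩, ?_⟩
                dsimp only
                rw [if_neg (by omega)]
            rwa [← e2] at hm
          · obtain ⟨a', ha'⟩ : ∃ a', u 0 = a' + 3 := ⟨u 0 - 3, by omega⟩
            rw [ha']
            refine le_sup_right (a := Submodule.span ℂ (Set.range fun i : Fin q =>
              if (i:ℕ) = q-1 then (X 0 : R2) else X 1 ^ (i:ℕ))) ?_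
            rw [Submodule.restrictScalars_mem,
              show (X 0:R2)^(a'+3) = X 0^(a'+1) * ((X 0:R2)^2 + C ((q:ℂ)-1) * X 1^(q-2))
                - (C ((q:ℂ)-1) * X 0^a' * X 1^(q-3)) * (X 0 * X 1) by
                  rw [show (X 1:R2)^(q-2) = X 1^(q-3)*X 1 by rw [← pow_succ]; congr 1; omega]
                  ring]
            exact sub_mem
              (Ideal.mul_mem_left _ _
                (Ideal.subset_span (Set.mem_insert_iff.mpr (Or.inr (Set.mem_insert _ _)))))
              (Ideal.mul_mem_left _ _ (Ideal.subset_span (Set.mem_insert _ _)))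
      · refine le_sup_right (a := Submodule.span ℂ (Set.range fun i : Fin q =>
          if (i:ℕ) = q-1 then (X 0 : R2) else X 1 ^ (i:ℕ))) ?_
        rw [Submodule.restrictScalars_mem,
          show (X 0:R2)^(u 0) * X 1^(u 1) = (X 0^(u 0-1) * X 1^(u 1-1)) * (X 0 * X 1) by
            rw [mul_mul_mul_comm, ← pow_succ, ← pow_succ]; congr 2 <;> omega]
        exact Ideal.mul_mem_left _ _ (Ideal.subset_span (by simp))

end CaseThree

/-- For `n = 2` and the `D_q` singularity `g = y₁²y₂ + y₂^{q-1}`,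
`q ≥ 4`, one has `χ₁(g) = 1`, `χ₂(g) = q - 1` and `χ₃(g) = q`. -/
theorem chi_of_Dq {q : ℕ} (hq : 4 ≤ q) :
    chi ((X 0 : MvPolynomial (Fin 2) ℂ) ^ 2 * X 1 + X 1 ^ (q - 1)) 1 = 1 ∧
    chi ((X 0 : MvPolynomial (Fin 2) ℂ) ^ 2 * X 1 + X 1 ^ (q - 1)) 2 = q - 1 ∧
    chi ((X 0 : MvPolynomial (Fin 2) ℂ) ^ 2 * X 1 + X 1 ^ (q - 1)) 3 = q := by
  exact ⟨chi_one q hq, chi_two q hq, chi_three q hq⟩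
end

section
/- For the E_6 plane curve singularity g = y_1³ + y_2⁴, the first Hessian number is χ_1(g) = 2. -/
open MvPolynomial

noncomputable def gE6 : MvPolynomial (Fin 2) ℂ := X 0 ^ 3 + X 1 ^ 4

noncomputable def IE6 : Ideal (MvPolynomial (Fin 2) ℂ) :=
  Ideal.span {gE6} ⊔ jacobianIdeal gE6 ⊔ minorsIdeal (hessianMatrix gE6) 1

lemma pd3 : ∀ i : Fin 2, pderiv i (3 : MvPolynomial (Fin 2) ℂ) = 0 := by
  intro i; rw [show (3:MvPolynomial (Fin 2) ℂ) = C 3 by rw [map_ofNat]]; simp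
lemma pd4 : ∀ i : Fin 2, pderiv i (4 : MvPolynomial (Fin 2) ℂ) = 0 := by
  intro i; rw [show (4:MvPolynomial (Fin 2) ℂ) = C 4 by rw [map_ofNat]]; simp

lemma hess00 : hessianMatrix gE6 0 0 = 6 * X 0 := by
  simp [hessianMatrix, gE6, pd3, pd4]; ring
lemma hess01 : hessianMatrix gE6 0 1 = 0 := by simp [hessianMatrix, gE6, pd3, pd4]
lemma hess10 : hessianMatrix gE6 1 0 = 0 := by simp [hessianMatrix, gE6, pd3, pd4]
lemma hess11 : hessianMatrix gE6 1 1 = 12 * X 1 ^ 2 := by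
  simp [hessianMatrix, gE6, pd3, pd4]; ring

lemma mem_minors (i j : Fin 2) : hessianMatrix gE6 i j ∈ minorsIdeal (hessianMatrix gE6) 1 := by
  apply Ideal.subset_span
  refine ⟨fun _ => i, fun _ => j, ?_⟩
  rw [Matrix.det_fin_one, Matrix.submatrix_apply]

lemma X0_mem : (X 0 : MvPolynomial (Fin 2) ℂ) ∈ IE6 := by
  have h : (6 : MvPolynomial (Fin 2) ℂ) * X 0 ∈ IE6 := by
    rw [← hess00]
    exact Ideal.mem_sup_right (mem_minors 0 0)
  have h2 := Ideal.mul_mem_left IE6 (C (1/6 : ℂ)) h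
  convert h2 using 1
  rw [show (6 : MvPolynomial (Fin 2) ℂ) = C 6 by rw [map_ofNat]]
  rw [← mul_assoc, ← map_mul]
  norm_num

lemma X1sq_mem : (X 1 : MvPolynomial (Fin 2) ℂ) ^ 2 ∈ IE6 := by
  have h : (12 : MvPolynomial (Fin 2) ℂ) * X 1 ^ 2 ∈ IE6 := by
    rw [← hess11]
    exact Ideal.mem_sup_right (mem_minors 1 1)
  have h2 := Ideal.mul_mem_left IE6 (C (1/12 : ℂ)) h
  convert h2 using 1
  rw [show (12 : MvPolynomial (Fin 2) ℂ) = C 12 by rw [map_ofNat]]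
  rw [← mul_assoc, ← map_mul]
  norm_num

open DualNumber

noncomputable def φE6 : MvPolynomial (Fin 2) ℂ →ₐ[ℂ] DualNumber ℂ :=
  aeval ![0, ε]

lemma phi_X0 : φE6 (X 0) = 0 := by simp [φE6]
lemma phi_X1 : φE6 (X 1) = ε := by simp [φE6]

lemma eps_sq : (ε : DualNumber ℂ) ^ 2 = 0 := by rw [pow_two, eps_mul_eps]

lemma hess_phi : ∀ i j : Fin 2, φE6 (hessianMatrix gE6 i j) = 0 := by
  rw [Fin.forall_fin_two]
  refine ⟨?_, ?_⟩ <;> rw [Fin.forall_fin_two] <;> refine ⟨?_, ?_⟩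
  · rw [hess00]; simp [phi_X0]
  · rw [hess01]; simp
  · rw [hess10]; simp
  · rw [hess11]; simp only [map_mul, map_pow, phi_X1, eps_sq, mul_zero]

lemma ker_phi : IE6 ≤ RingHom.ker φE6 := by
  refine sup_le (sup_le ?_ ?_) ?_
  · rw [Ideal.span_le]
    rintro x rfl
    simp only [SetLike.mem_coe, RingHom.mem_ker, gE6, map_add, map_pow, phi_X0, phi_X1]
    rw [show (4:ℕ) = 2 + 2 by rfl, pow_add, eps_sq]
    ring
  · rw [jacobianIdeal, Ideal.span_le]
    rintro x ⟨i, rfl⟩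
    simp only [SetLike.mem_coe, RingHom.mem_ker]
    match i with
    | 0 =>
      rw [show pderiv (0:Fin 2) gE6 = 3 * X 0 ^ 2 by simp [gE6]]
      simp [phi_X0]
    | 1 =>
      rw [show pderiv (1:Fin 2) gE6 = 4 * X 1 ^ 3 by simp [gE6]]
      simp only [map_mul, map_pow, phi_X1]
      rw [pow_succ, eps_sq]
      ring
  · rw [minorsIdeal, Ideal.span_le]
    rintro x ⟨r, c, rfl⟩
    simp only [SetLike.mem_coe, RingHom.mem_ker, Matrix.det_fin_one, Matrix.submatrix_apply]
    exact hess_phi (r 0) (c 0)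

noncomputable def ψE6 : (MvPolynomial (Fin 2) ℂ ⧸ IE6) →ₐ[ℂ] DualNumber ℂ :=
  Ideal.Quotient.liftₐ IE6 φE6 (fun _a ha => RingHom.mem_ker.mp (ker_phi ha))

noncomputable def vE6 : Fin 2 → (MvPolynomial (Fin 2) ℂ ⧸ IE6) :=
  ![1, Ideal.Quotient.mk IE6 (X 1)]

lemma psi_comp : ψE6 ∘ vE6 = ![1, ε] := by
  funext i
  match i with
  | 0 => simp [ψE6, vE6]
  | 1 =>
    show ψE6 (Ideal.Quotient.mk IE6 (X 1)) = ε
    rw [show ψE6 (Ideal.Quotient.mk IE6 (X 1)) = φE6 (X 1) from rfl, phi_X1]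

lemma indep_target : LinearIndependent ℂ (![1, ε] : Fin 2 → DualNumber ℂ) := by
  rw [LinearIndependent.pair_iff]
  intro s t h
  have h1 := congrArg TrivSqZeroExt.fst h
  have h2 := congrArg TrivSqZeroExt.snd h
  simp at h1 h2
  exact ⟨h1, h2⟩

lemma indep_v : LinearIndependent ℂ vE6 := by
  apply LinearIndependent.of_comp ψE6.toLinearMap
  have : (ψE6.toLinearMap ∘ vE6) = ![1, ε] := psi_comp
  rw [this]
  exact indep_target

lemma mkX0 : Ideal.Quotient.mk IE6 (X 0) = 0 := (Ideal.Quotient.eq_zero_iff_mem).mpr X0_mem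
lemma mkX1sq : Ideal.Quotient.mk IE6 (X 1) * Ideal.Quotient.mk IE6 (X 1) = 0 := by
  rw [← map_mul, ← pow_two]
  exact (Ideal.Quotient.eq_zero_iff_mem).mpr X1sq_mem

lemma mk_smul_one (a : ℂ) : Ideal.Quotient.mk IE6 (C a) =
    a • (1 : MvPolynomial (Fin 2) ℂ ⧸ IE6) := by
  rw [show (C a : MvPolynomial (Fin 2) ℂ) = a • 1 by
    rw [MvPolynomial.smul_eq_C_mul, mul_one]]
  exact map_smul (Ideal.Quotient.mkₐ ℂ IE6) a 1

lemma mk_mem_span (p : MvPolynomial (Fin 2) ℂ) :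
    Ideal.Quotient.mk IE6 p ∈ Submodule.span ℂ (Set.range vE6) := by
  induction p using MvPolynomial.induction_on with
  | C a =>
    rw [mk_smul_one]
    exact Submodule.smul_mem _ a (Submodule.subset_span ⟨0, rfl⟩)
  | add p q hp hq =>
    rw [map_add]
    exact Submodule.add_mem _ hp hq
  | mul_X p i hp =>
    rw [map_mul]
    match i with
    | 0 => rw [mkX0, mul_zero]; exact Submodule.zero_mem _
    | 1 =>
      refine Submodule.span_induction (p := fun q _ =>
        q * Ideal.Quotient.mk IE6 (X 1) ∈ Submodule.span ℂ (Set.range vE6)) ?_ ?_ ?_ ?_ hp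
      · rintro x ⟨j, rfl⟩
        match j with
        | 0 =>
          show (1 : MvPolynomial (Fin 2) ℂ ⧸ IE6) * _ ∈ _
          rw [one_mul]
          exact Submodule.subset_span ⟨1, rfl⟩
        | 1 =>
          show Ideal.Quotient.mk IE6 (X 1) * Ideal.Quotient.mk IE6 (X 1) ∈ _
          rw [mkX1sq]
          exact Submodule.zero_mem _
      · show (0 : MvPolynomial (Fin 2) ℂ ⧸ IE6) * _ ∈ _
        rw [zero_mul]; exact Submodule.zero_mem _
      · intro x y _ _ hx hy
        show (x + y) * _ ∈ _
        rw [add_mul]; exact Submodule.add_mem _ hx hy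
      · intro a x _ hx
        show (a • x) * _ ∈ _
        rw [smul_mul_assoc]; exact Submodule.smul_mem _ a hx

lemma span_v : ⊤ ≤ Submodule.span ℂ (Set.range vE6) := by
  intro q _
  obtain ⟨p, rfl⟩ := Ideal.Quotient.mk_surjective q
  exact mk_mem_span p

noncomputable def basisE6 : Module.Basis (Fin 2) ℂ (MvPolynomial (Fin 2) ℂ ⧸ IE6) :=
  Module.Basis.mk indep_v span_v

lemma finrank_E6 : Module.finrank ℂ (MvPolynomial (Fin 2) ℂ ⧸ IE6) = 2 := by
  rw [Module.finrank_eq_card_basis basisE6, Fintype.card_fin]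

/-- For the `E₆` singularity `g = y₁³ + y₂⁴`, one has `χ₁(g) = 2`. -/
theorem chi_one_of_E6 :
    chi ((X 0 : MvPolynomial (Fin 2) ℂ) ^ 3 + X 1 ^ 4) 1 = 2 := by
  exact finrank_E6
end

section
/- For the E_8 plane curve singularity g = y_1³ + y_2⁵, the first Hessian number is χ_1(g) = 3. -/
open MvPolynomial

/-- `pderiv` kills numerals. -/
lemma pd_ofNat {σ : Type*} (i : σ) (n : ℕ) [n.AtLeastTwo] :
    pderiv i (OfNat.ofNat n : MvPolynomial σ ℂ) = 0 := by
  rw [← Nat.cast_ofNat, ← MvPolynomial.C_eq_coe_nat, pderiv_C]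

local notation "gE" => ((X 0 : MvPolynomial (Fin 2) ℂ) ^ 3 + X 1 ^ 5)

/-- The relevant ideal for the `E₈` singularity is `(x, y³)`. -/
lemma E8_ideal_eq :
    Ideal.span {gE} ⊔ jacobianIdeal gE ⊔ minorsIdeal (hessianMatrix gE) 1 =
      Ideal.span {(X 0 : MvPolynomial (Fin 2) ℂ), X 1 ^ 3} := by
  have h00 : pderiv (0:Fin 2) (pderiv (0:Fin 2) gE) = 6 * X 0 := by
    simp [pderiv_pow]; rw [pd_ofNat]; ring
  have h01 : pderiv (0:Fin 2) (pderiv (1:Fin 2) gE) = 0 := by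
    simp [pderiv_pow]; rw [pd_ofNat]
  have h10 : pderiv (1:Fin 2) (pderiv (0:Fin 2) gE) = 0 := by
    simp [pderiv_pow]; rw [pd_ofNat]
  have h11 : pderiv (1:Fin 2) (pderiv (1:Fin 2) gE) = 20 * X 1 ^ 3 := by
    simp [pderiv_pow]; rw [pd_ofNat]; ring
  have hp0 : pderiv (0:Fin 2) gE = 3 * X 0 ^ 2 := by simp [pderiv_pow]
  have hp1 : pderiv (1:Fin 2) gE = 5 * X 1 ^ 4 := by simp [pderiv_pow]
  have hX0 : (X 0 : MvPolynomial (Fin 2) ℂ) ∈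
      Ideal.span {(X 0 : MvPolynomial (Fin 2) ℂ), X 1 ^ 3} :=
    Ideal.subset_span (by simp)
  have hX1 : ((X 1 : MvPolynomial (Fin 2) ℂ) ^ 3) ∈
      Ideal.span {(X 0 : MvPolynomial (Fin 2) ℂ), X 1 ^ 3} :=
    Ideal.subset_span (by simp)
  apply le_antisymm
  · refine sup_le (sup_le ?_ ?_) ?_
    · rw [Ideal.span_le, Set.singleton_subset_iff]
      have : gE = X 0 ^ 2 * X 0 + X 1 ^ 2 * X 1 ^ 3 := by ring
      rw [this]
      exact Ideal.add_mem _ (Ideal.mul_mem_left _ _ hX0) (Ideal.mul_mem_left _ _ hX1)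
    · rw [jacobianIdeal, Ideal.span_le]
      rintro x ⟨i, rfl⟩
      have : ∀ i : Fin 2, pderiv i gE ∈ Ideal.span {(X 0 : MvPolynomial (Fin 2) ℂ), X 1 ^ 3} := by
        rw [Fin.forall_fin_two]
        constructor
        · rw [hp0, show (3 * X 0 ^ 2 : MvPolynomial (Fin 2) ℂ) = 3 * X 0 * X 0 by ring]
          exact Ideal.mul_mem_left _ _ hX0
        · rw [hp1, show (5 * X 1 ^ 4 : MvPolynomial (Fin 2) ℂ) = 5 * X 1 * X 1 ^ 3 by ring]
          exact Ideal.mul_mem_left _ _ hX1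
      exact this i
    · rw [minorsIdeal, Ideal.span_le]
      rintro x ⟨r, c, rfl⟩
      rw [Matrix.det_fin_one, Matrix.submatrix_apply]
      have : ∀ i j : Fin 2, hessianMatrix gE i j ∈
          Ideal.span {(X 0 : MvPolynomial (Fin 2) ℂ), X 1 ^ 3} := by
        rw [Fin.forall_fin_two]
        constructor <;> rw [Fin.forall_fin_two] <;> constructor <;>
          simp only [hessianMatrix, Matrix.of_apply]
        · rw [h00]; exact Ideal.mul_mem_left _ 6 hX0
        · rw [h01]; exact Ideal.zero_mem _
        · rw [h10]; exact Ideal.zero_mem _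
        · rw [h11]; exact Ideal.mul_mem_left _ 20 hX1
      exact this _ _
  · rw [Ideal.span_le]
    rintro x (rfl | rfl)
    · have hm : (6 * X 0 : MvPolynomial (Fin 2) ℂ) ∈ minorsIdeal (hessianMatrix gE) 1 := by
        rw [minorsIdeal]
        exact Ideal.subset_span ⟨fun _ => 0, fun _ => 0, by
          rw [Matrix.det_fin_one, Matrix.submatrix_apply]; exact h00.symm⟩
      have hx : (X 0 : MvPolynomial (Fin 2) ℂ) = C (6⁻¹ : ℂ) * (6 * X 0) := by
        rw [← mul_assoc, show (C (6⁻¹:ℂ) * 6 : MvPolynomial (Fin 2) ℂ) = 1 by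
          rw [← map_ofNat (C : ℂ →+* MvPolynomial (Fin 2) ℂ) 6, ← map_mul]; norm_num]
        ring
      have h6 := Ideal.mul_mem_left _ (C (6⁻¹:ℂ)) hm
      rw [← hx] at h6
      exact Submodule.mem_sup_right h6
    · have hm : (20 * X 1 ^ 3 : MvPolynomial (Fin 2) ℂ) ∈ minorsIdeal (hessianMatrix gE) 1 := by
        rw [minorsIdeal]
        exact Ideal.subset_span ⟨fun _ => 1, fun _ => 1, by
          rw [Matrix.det_fin_one, Matrix.submatrix_apply]; exact h11.symm⟩
      have hx : (X 1 ^ 3 : MvPolynomial (Fin 2) ℂ) = C (20⁻¹ : ℂ) * (20 * X 1 ^ 3) := by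
        rw [← mul_assoc, show (C (20⁻¹:ℂ) * 20 : MvPolynomial (Fin 2) ℂ) = 1 by
          rw [← map_ofNat (C : ℂ →+* MvPolynomial (Fin 2) ℂ) 20, ← map_mul]; norm_num]
        ring
      have h20 := Ideal.mul_mem_left _ (C (20⁻¹:ℂ)) hm
      rw [← hx] at h20
      exact Submodule.mem_sup_right h20

/-- `MvPolynomial (Fin 1) ℂ ≃ₐ[ℂ] ℂ[X]`. -/
noncomputable def e2Aux : MvPolynomial (Fin 1) ℂ ≃ₐ[ℂ] Polynomial ℂ :=
  (renameEquiv ℂ ((Equiv.equivPUnit (Fin 1)) : Fin 1 ≃ PUnit.{1})).trans (pUnitAlgEquiv ℂ)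

lemma e2Aux_X : e2Aux (X 0) = Polynomial.X := by simp [e2Aux]

/-- `MvPolynomial (Fin 2) ℂ ≃ₐ[ℂ] ℂ[X][X]`. -/
noncomputable def E8Equiv : MvPolynomial (Fin 2) ℂ ≃ₐ[ℂ] Polynomial (Polynomial ℂ) :=
  (MvPolynomial.finSuccEquiv ℂ 1).trans (Polynomial.mapAlgEquiv e2Aux)

lemma E8Equiv_X0 : E8Equiv (X 0) = Polynomial.X := by
  simp [E8Equiv, MvPolynomial.finSuccEquiv_X_zero]

lemma E8Equiv_X1 : E8Equiv (X 1) = Polynomial.C Polynomial.X := by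
  have h1 : (MvPolynomial.finSuccEquiv ℂ 1) (X 1) = Polynomial.C (X 0) := by
    have := MvPolynomial.finSuccEquiv_X_succ (R := ℂ) (n := 1) (j := 0)
    simpa using this
  simp [E8Equiv, h1, e2Aux_X]

/-- `ℂ[X][X] ⧸ (X) ≃ₐ[ℂ] ℂ[X]`. -/
noncomputable def fq : (Polynomial (Polynomial ℂ) ⧸
    Ideal.span {(Polynomial.X : Polynomial (Polynomial ℂ))}) ≃ₐ[ℂ] Polynomial ℂ :=
  (Ideal.quotientEquivAlgOfEq ℂ (show Ideal.span {(Polynomial.X : Polynomial (Polynomial ℂ))} =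
      Ideal.span {Polynomial.X - Polynomial.C (0 : Polynomial ℂ)} by simp)).trans
    (AlgEquiv.restrictScalars ℂ (Polynomial.quotientSpanXSubCAlgEquiv (0 : Polynomial ℂ)))

lemma fq_mk (p : Polynomial (Polynomial ℂ)) :
    fq (Ideal.Quotient.mk _ p) = p.eval 0 := by
  rw [fq, AlgEquiv.trans_apply, AlgEquiv.restrictScalars_apply, Ideal.quotientEquivAlgOfEq_mk]
  exact Polynomial.quotientSpanXSubCAlgEquiv_mk (0 : Polynomial ℂ) p

/-- The quotient by `(x, y³)` is isomorphic to `ℂ[X]/(X³)`. -/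
noncomputable def E8QuotEquiv :
    (MvPolynomial (Fin 2) ℂ ⧸ Ideal.span {(X 0 : MvPolynomial (Fin 2) ℂ), X 1 ^ 3})
      ≃ₐ[ℂ] (Polynomial ℂ ⧸ Ideal.span {(Polynomial.X : Polynomial ℂ) ^ 3}) := by
  have hmap : (Ideal.span {(X 0 : MvPolynomial (Fin 2) ℂ), X 1 ^ 3}).map
      (E8Equiv : MvPolynomial (Fin 2) ℂ →+* Polynomial (Polynomial ℂ)) =
      Ideal.span {(Polynomial.X : Polynomial (Polynomial ℂ))} ⊔
        Ideal.span {Polynomial.C Polynomial.X ^ 3} := by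
    rw [Ideal.map_span, Set.image_insert_eq, Set.image_singleton]
    rw [show (E8Equiv : MvPolynomial (Fin 2) ℂ →+* Polynomial (Polynomial ℂ)) (X 0) =
          Polynomial.X from E8Equiv_X0,
        map_pow,
        show (E8Equiv : MvPolynomial (Fin 2) ℂ →+* Polynomial (Polynomial ℂ)) (X 1) =
          Polynomial.C Polynomial.X from E8Equiv_X1,
        Ideal.span_insert]
  refine (Ideal.quotientEquivAlg _ _ E8Equiv hmap.symm).trans ?_
  refine ((DoubleQuot.quotQuotEquivQuotSupₐ ℂ _ _).symm).trans ?_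
  haveI : (Ideal.map (Ideal.Quotient.mkₐ ℂ (Ideal.span {(Polynomial.X : Polynomial (Polynomial ℂ))})) (Ideal.span {Polynomial.C Polynomial.X ^ 3})).IsTwoSided := ⟨fun b ha => mul_comm b _ ▸ Ideal.mul_mem_left _ b ha⟩
  refine (Ideal.quotientEquivAlg _ _ fq rfl).trans ?_
  refine Ideal.quotientEquivAlgOfEq ℂ ?_
  rw [show Ideal.map (Ideal.Quotient.mkₐ ℂ (Ideal.span {(Polynomial.X : Polynomial (Polynomial ℂ))}))
        (Ideal.span {Polynomial.C Polynomial.X ^ 3})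
      = Ideal.map (Ideal.Quotient.mk (Ideal.span {(Polynomial.X : Polynomial (Polynomial ℂ))}))
        (Ideal.span {Polynomial.C Polynomial.X ^ 3}) from rfl]
  rw [Ideal.map_map, Ideal.map_span, Set.image_singleton, RingHom.comp_apply]
  have h1 : ((fq : _ →+* Polynomial ℂ)
      ((Ideal.Quotient.mk (Ideal.span {(Polynomial.X : Polynomial (Polynomial ℂ))}))
        (Polynomial.C Polynomial.X ^ 3)))
      = (Polynomial.C Polynomial.X ^ 3 : Polynomial (Polynomial ℂ)).eval 0 := fq_mk _
  rw [h1]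
  simp

/-- For the `E₈` singularity `g = y₁³ + y₂⁵`, one has `χ₁(g) = 3`. -/
theorem chi_one_of_E8 :
    chi ((X 0 : MvPolynomial (Fin 2) ℂ) ^ 3 + X 1 ^ 5) 1 = 3 := by
  rw [chi, E8_ideal_eq, E8QuotEquiv.toLinearEquiv.finrank_eq]
  have h : ((Polynomial.X : Polynomial ℂ) ^ 3) ≠ 0 := pow_ne_zero _ Polynomial.X_ne_zero
  have h2 := (AdjoinRoot.powerBasis h).finrank
  rw [show (AdjoinRoot.powerBasis h).dim = 3 by simp [AdjoinRoot.powerBasis]] at h2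
  exact h2
end
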